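/- arXiv:2007.07443 — 7 statements merged into one kernel-verified Lean document; each statement's English description precedes it below -/
import Mathlib

section
/- Let S, A be measurable spaces, a^A ∈ A a fixed anchor action, κ : S × A → Measure(S) a Markov kernel, γ ∈ [0, 1), and α > 0. Let p : S → ℝ and Q : S × A → ℝ be bounded measurable (p plays the role of s ↦ log π(s, a^A)), and define the reward estimator R[Q](s, a) := Q(s, a) − γ·∫_S (−α·p(s') + Q(s', a^A)) dκ(s, a)(s'). Then for every bounded measurable φ : S → ℝ, the shaped input Q'(s, a) := Q(s, a) + φ(s) satisfies R[Q'](s, a) = R[Q](s, a) + φ(s) − γ·∫_S φ(s') dκ(s, a)(s') for all (s, a) ∈ S × A. -/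
open MeasureTheory Real

/-- Confounding lemma: for the reward estimator
`R[Q](s,a) = Q(s,a) - γ ∫ (-α p(s') + Q(s',a^A)) dκ(s,a)(s')` (with `p` playing the
role of `s ↦ log π(s, a^A)`), shaping the input `Q` by a bounded measurable state-only
function `φ` shapes the output reward by `Φ(s,a) = φ(s) - γ ∫ φ(s') dκ(s,a)(s')`. -/
theorem reward_estimator_shaping
    {S A : Type*} [MeasurableSpace S] [MeasurableSpace A] (aA : A)
    (κ : S × A → Measure S) (hκm : Measurable κ)
    (hκp : ∀ sa, IsProbabilityMeasure (κ sa))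
    (γ : ℝ) (hγ0 : 0 ≤ γ) (hγ1 : γ < 1) (α : ℝ) (hα : 0 < α)
    (p : S → ℝ) (hpm : Measurable p) (Cp : ℝ) (hpb : ∀ s, |p s| ≤ Cp)
    (Q : S → A → ℝ) (hQm : Measurable fun sa : S × A => Q sa.1 sa.2)
    (CQ : ℝ) (hQb : ∀ s a, |Q s a| ≤ CQ)
    (R : (S → A → ℝ) → S → A → ℝ)
    (hR : ∀ F : S → A → ℝ, ∀ s a,
      R F s a = F s a - γ * ∫ s', (-α * p s' + F s' aA) ∂(κ (s, a)))
    (φ : S → ℝ) (hφm : Measurable φ) (Cφ : ℝ) (hφb : ∀ s, |φ s| ≤ Cφ) :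
    ∀ s a, R (fun s' a' => Q s' a' + φ s') s a
      = R Q s a + φ s - γ * ∫ s', φ s' ∂(κ (s, a)) := by
  intro s a
  have hQA : Measurable fun s' => Q s' aA :=
    hQm.comp (measurable_id.prodMk measurable_const)
  haveI := hκp (s, a)
  have h1 : Integrable (fun s' => -α * p s' + Q s' aA) (κ (s, a)) := by
    refine (integrable_const (|α| * Cp + CQ)).mono'
      ((hpm.const_mul _).add hQA).aestronglyMeasurable (ae_of_all _ fun s' => ?_)
    have := abs_add_le (-α * p s') (Q s' aA)
    simp only [Real.norm_eq_abs]
    calc |(-α) * p s' + Q s' aA| ≤ |(-α) * p s'| + |Q s' aA| := abs_add_le _ _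
      _ ≤ |α| * Cp + CQ := by
          rw [abs_mul, abs_neg]
          exact add_le_add (mul_le_mul_of_nonneg_left (hpb s') (abs_nonneg _)) (hQb s' aA)
  have h2 : Integrable φ (κ (s, a)) := by
    refine (integrable_const Cφ).mono' hφm.aestronglyMeasurable (ae_of_all _ fun s' => ?_)
    simpa using hφb s'
  rw [hR, hR]
  have : (∫ s', (-α * p s' + (Q s' aA + φ s')) ∂(κ (s, a)))
      = (∫ s', (-α * p s' + Q s' aA) ∂(κ (s, a))) + ∫ s', φ s' ∂(κ (s, a)) := by
    rw [← integral_add h1 h2]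
    congr 1; ext s'; ring
  rw [this]; ring
end

section
/- Let S, A be measurable spaces, a^A ∈ A, let ν be a measure on A with 0 < ν(A) < ∞, κ : S × A → Measure(S) a Markov kernel, γ ∈ [0, 1), and α > 0. Let Q : S × A → ℝ be bounded measurable, let r : S × A → ℝ, define V(s) := α·log(∫_A exp(Q(s,a)/α) dν(a)) and π(s,a) := exp(Q(s,a)/α) / ∫_A exp(Q(s,a')/α) dν(a'), and suppose the soft Bellman equation Q(s,a) = r(s,a) + γ·∫_S V(s') dκ(s,a)(s') holds for all (s,a). Then for all (s,a) ∈ S × A, Q(s,a) = r(s,a) + γ·∫_S (−α·log π(s', a^A) + Q(s', a^A)) dκ(s,a)(s'); equivalently, r(s,a) = Q(s,a) − γ·∫_S (−α·log π(s', a^A) + Q(s', a^A)) dκ(s,a)(s'). -/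
open MeasureTheory Real

/-- If `Q` satisfies the soft Bellman equation `Q(s,a) = r(s,a) + γ E[V(s') | s,a]` with
soft value `V(s) = α log ∫ exp(Q(s,a)/α) dν(a)` and softmax policy
`π(s,a) = exp(Q(s,a)/α) / ∫ exp(Q(s,a')/α) dν(a')`, then for every `(s,a)`,
`Q(s,a) = r(s,a) + γ E[-α log π(s',a^A) + Q(s',a^A) | s,a]`; equivalently the
R-Estimator with exact policy and exact expectation recovers the true reward. -/
theorem soft_bellman_anchor_representation
    {S A : Type*} [MeasurableSpace S] [MeasurableSpace A] (aA : A)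
    (ν : Measure A) (hν0 : ν Set.univ ≠ 0) (hνfin : ν Set.univ < ⊤)
    (κ : S × A → Measure S) (hκm : Measurable κ)
    (hκp : ∀ sa, IsProbabilityMeasure (κ sa))
    (γ : ℝ) (hγ0 : 0 ≤ γ) (hγ1 : γ < 1) (α : ℝ) (hα : 0 < α)
    (Q : S → A → ℝ) (hQm : Measurable fun sa : S × A => Q sa.1 sa.2)
    (CQ : ℝ) (hQb : ∀ s a, |Q s a| ≤ CQ)
    (r : S → A → ℝ)
    (V : S → ℝ) (hV : ∀ s, V s = α * Real.log (∫ a, Real.exp (Q s a / α) ∂ν))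
    (pol : S → A → ℝ)
    (hπ : ∀ s a, pol s a = Real.exp (Q s a / α) / ∫ a', Real.exp (Q s a' / α) ∂ν)
    (hBell : ∀ s a, Q s a = r s a + γ * ∫ s', V s' ∂(κ (s, a))) :
    (∀ s a, Q s a
        = r s a + γ * ∫ s', (-α * Real.log (pol s' aA) + Q s' aA) ∂(κ (s, a))) ∧
    (∀ s a, r s a
        = Q s a - γ * ∫ s', (-α * Real.log (pol s' aA) + Q s' aA) ∂(κ (s, a))) := by
  have key : ∀ s', -α * Real.log (pol s' aA) + Q s' aA = V s' := by
    intro s'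
    have hmeas : Measurable fun a => Real.exp (Q s' a / α) :=
      ((hQm.comp (measurable_prodMk_left : Measurable fun a : A => (s', a))).div_const α).exp
    have : IsFiniteMeasure ν := ⟨hνfin⟩
    have hint : Integrable (fun a => Real.exp (Q s' a / α)) ν := by
      refine ⟨hmeas.aestronglyMeasurable, ?_⟩
      apply HasFiniteIntegral.of_bounded (C := Real.exp (CQ / α))
      filter_upwards with a
      rw [Real.norm_eq_abs, abs_of_pos (Real.exp_pos _)]
      exact Real.exp_le_exp.mpr (div_le_div_of_nonneg_right
        ((abs_le.mp (hQb s' a)).2) hα.le)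
    have hpos : 0 < ∫ a, Real.exp (Q s' a / α) ∂ν := by
      have hlow : ∫ (_ : A), Real.exp (-CQ / α) ∂ν ≤ ∫ a, Real.exp (Q s' a / α) ∂ν := by
        refine integral_mono (integrable_const _) hint fun a => ?_
        exact Real.exp_le_exp.mpr (div_le_div_of_nonneg_right
          (neg_le_of_abs_le (hQb s' a)) hα.le)
      have : 0 < ∫ (_ : A), Real.exp (-CQ / α) ∂ν := by
        rw [integral_const, smul_eq_mul]
        exact mul_pos (ENNReal.toReal_pos hν0 hνfin.ne) (Real.exp_pos _)
      linarith
    rw [hπ, hV, Real.log_div (Real.exp_pos _).ne' hpos.ne', Real.log_exp]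
    field_simp
    ring
  have hEq : ∀ s a,
      (∫ s', (-α * Real.log (pol s' aA) + Q s' aA) ∂(κ (s, a)))
        = ∫ s', V s' ∂(κ (s, a)) := by
    intro s a
    exact integral_congr_ae (Filter.Eventually.of_forall fun s' => key s')
  constructor
  · intro s a; rw [hEq]; exact hBell s a
  · intro s a; rw [hEq]; have := hBell s a; linarith
end

section
/- Let S be a measurable space, κ : S → Measure(S) a Markov kernel, γ ∈ [0, 1), α > 0, and g, p, p̂ : S → ℝ bounded measurable with |p̂(s) − p(s)| ≤ ε for all s ∈ S. Suppose f, h : S → ℝ are bounded measurable and satisfy f(s) = g(s) + γ·∫_S (−α·p̂(s') + f(s')) dκ(s)(s') and h(s) = g(s) + γ·∫_S (−α·p(s') + h(s')) dκ(s)(s') for all s ∈ S. Then |f(s) − h(s)| ≤ γ·α·ε / (1 − γ) for all s ∈ S. -/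
open MeasureTheory Real

/-- If `f` and `h` are bounded measurable fixed points of the anchor Bellman operators
built with log-policies `p̂` and `p` respectively, where `|p̂ - p| ≤ ε` pointwise, then
`|f - h| ≤ γ α ε / (1 - γ)` pointwise. -/
theorem anchor_fixed_point_policy_perturbation
    {S : Type*} [MeasurableSpace S] (κ : S → Measure S)
    (hκm : Measurable κ) (hκp : ∀ s, IsProbabilityMeasure (κ s))
    (γ : ℝ) (hγ0 : 0 ≤ γ) (hγ1 : γ < 1) (α : ℝ) (hα : 0 < α)
    (g p phat : S → ℝ) (hgm : Measurable g) (hpm : Measurable p) (hphatm : Measurable phat)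
    (Cg Cp Cphat : ℝ) (hgb : ∀ s, |g s| ≤ Cg) (hpb : ∀ s, |p s| ≤ Cp)
    (hphatb : ∀ s, |phat s| ≤ Cphat)
    (ε : ℝ) (hpe : ∀ s, |phat s - p s| ≤ ε)
    (f h : S → ℝ) (hfm : Measurable f) (hhm : Measurable h)
    (Cf Ch : ℝ) (hfb : ∀ s, |f s| ≤ Cf) (hhb : ∀ s, |h s| ≤ Ch)
    (hffix : ∀ s, f s = g s + γ * ∫ s', (-α * phat s' + f s') ∂(κ s))
    (hhfix : ∀ s, h s = g s + γ * ∫ s', (-α * p s' + h s') ∂(κ s)) :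
    ∀ s, |f s - h s| ≤ γ * α * ε / (1 - γ) := by
  intro s0
  have hε : 0 ≤ ε := le_trans (abs_nonneg _) (hpe s0)
  have hγ' : 0 < 1 - γ := by linarith
  set K := γ * α * ε / (1 - γ) with hK
  have hK0 : 0 ≤ K := by positivity
  set M := Cf + Ch with hM
  have hM0 : 0 ≤ M := le_trans (abs_nonneg (f s0)) (le_trans (hfb s0)
    (le_add_of_nonneg_right (le_trans (abs_nonneg (h s0)) (hhb s0))))
  have int_bdd : ∀ (u : S → ℝ) (C : ℝ), Measurable u → (∀ x, |u x| ≤ C) →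
      ∀ s, Integrable u (κ s) := fun u C hm hb s =>
    (integrable_const C).mono' hm.aestronglyMeasurable
      (Filter.Eventually.of_forall fun x => by simpa using hb x)
  have key : ∀ n : ℕ, ∀ s, |f s - h s| ≤ K + γ ^ n * M := by
    intro n
    induction n with
    | zero =>
      intro s
      have : |f s - h s| ≤ M := le_trans (abs_sub (f s) (h s)) (add_le_add (hfb s) (hhb s))
      simpa using le_trans this (le_add_of_nonneg_left hK0)
    | succ n ih =>
      intro s
      haveI := hκp s
      have h1 : Integrable (fun s' => -α * phat s' + f s') (κ s) :=
        int_bdd _ (α * Cphat + Cf)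
          ((hphatm.const_mul (-α)).add hfm)
          (fun x => le_trans (abs_add_le _ _) (by
            rw [abs_mul, abs_neg, abs_of_pos hα]
            exact add_le_add (mul_le_mul_of_nonneg_left (hphatb x) hα.le) (hfb x))) s
      have h2 : Integrable (fun s' => -α * p s' + h s') (κ s) :=
        int_bdd _ (α * Cp + Ch)
          ((hpm.const_mul (-α)).add hhm)
          (fun x => le_trans (abs_add_le _ _) (by
            rw [abs_mul, abs_neg, abs_of_pos hα]
            exact add_le_add (mul_le_mul_of_nonneg_left (hpb x) hα.le) (hhb x))) s
      have hdiff : f s - h s =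
          γ * ∫ s', ((-α * phat s' + f s') - (-α * p s' + h s')) ∂(κ s) := by
        rw [hffix s, hhfix s, integral_sub h1 h2]; ring
      have hbound : ∀ x, ‖(-α * phat x + f x) - (-α * p x + h x)‖ ≤
          α * ε + (K + γ ^ n * M) := by
        intro x
        have e1 : (-α * phat x + f x) - (-α * p x + h x) =
            -α * (phat x - p x) + (f x - h x) := by ring
        rw [Real.norm_eq_abs, e1]
        refine le_trans (abs_add_le _ _) (add_le_add ?_ (ih x))
        rw [abs_mul, abs_neg, abs_of_pos hα]
        exact mul_le_mul_of_nonneg_left (hpe x) hα.le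
      have hint : ‖∫ s', ((-α * phat s' + f s') - (-α * p s' + h s')) ∂(κ s)‖ ≤
          (α * ε + (K + γ ^ n * M)) := by
        have := norm_integral_le_of_norm_le_const (μ := κ s) (Filter.Eventually.of_forall hbound)
        simpa using this
      have : |f s - h s| ≤ γ * (α * ε + (K + γ ^ n * M)) := by
        rw [hdiff, abs_mul, abs_of_nonneg hγ0]
        exact mul_le_mul_of_nonneg_left (by simpa [Real.norm_eq_abs] using hint) hγ0
      refine le_trans this ?_
      have hKeq : γ * α * ε + γ * K = K := by
        rw [hK]; field_simp; ring
      have : γ * (α * ε + (K + γ ^ n * M)) = (γ * α * ε + γ * K) + γ ^ (n + 1) * M := by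
        ring
      rw [this, hKeq]
  have htend : Filter.Tendsto (fun n : ℕ => K + γ ^ n * M) Filter.atTop (nhds K) := by
    have h0 : Filter.Tendsto (fun n : ℕ => γ ^ n * M) Filter.atTop (nhds 0) := by
      simpa using (tendsto_pow_atTop_nhds_zero_of_lt_one hγ0 hγ1).mul_const M
    simpa using (tendsto_const_nhds.add h0 :
      Filter.Tendsto (fun n : ℕ => K + γ ^ n * M) Filter.atTop (nhds (K + 0)))
  exact ge_of_tendsto' htend fun n => key n s0
end

section
/- Let S, A be measurable spaces, a^A ∈ A, κ : S × A → Measure(S) a Markov kernel, γ ∈ [0, 1), α > 0, and ε, M ≥ 0. Let p, p̂ : S × A → ℝ be bounded measurable with |p̂(s,a) − p(s,a)| ≤ ε for all (s,a), let f, f̂ : S → ℝ be bounded measurable with |f̂(s) − f(s)| ≤ M for all s, and define Q̂(s,a) := α·p̂(s,a) − α·p̂(s,a^A) + f̂(s), Q(s,a) := α·p(s,a) − α·p(s,a^A) + f(s), r̄(s,a) := Q̂(s,a) − γ·∫_S (−α·p̂(s',a^A) + Q̂(s',a^A)) dκ(s,a)(s'), and r(s,a) := Q(s,a) − γ·∫_S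 (−α·p(s',a^A) + Q(s',a^A)) dκ(s,a)(s'). Then for all (s,a) ∈ S × A, |r̄(s,a) − r(s,a)| ≤ (1 + γ)·M + (2 + γ)·α·ε. -/
open MeasureTheory Real

/-- Pointwise reward estimation error bound: with estimated and true log-policies `p̂`, `p`
(`|p̂ - p| ≤ ε`), estimated and true anchor Q-functions `f̂`, `f` (`|f̂ - f| ≤ M`), the
corresponding Q-Estimators `Q̂`, `Q` and R-Estimators `r̄`, `r` (computed with the exact
transition expectation) satisfy `|r̄(s,a) - r(s,a)| ≤ (1+γ) M + (2+γ) α ε`. -/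
theorem reward_estimator_error_bound
    {S A : Type*} [MeasurableSpace S] [MeasurableSpace A] (aA : A)
    (κ : S × A → Measure S) (hκm : Measurable κ)
    (hκp : ∀ sa, IsProbabilityMeasure (κ sa))
    (γ : ℝ) (hγ0 : 0 ≤ γ) (hγ1 : γ < 1) (α : ℝ) (hα : 0 < α)
    (ε M : ℝ) (hε : 0 ≤ ε) (hM : 0 ≤ M)
    (p phat : S → A → ℝ)
    (hpm : Measurable fun sa : S × A => p sa.1 sa.2)
    (hphatm : Measurable fun sa : S × A => phat sa.1 sa.2)
    (Cp Cphat : ℝ) (hpb : ∀ s a, |p s a| ≤ Cp) (hphatb : ∀ s a, |phat s a| ≤ Cphat)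
    (hpe : ∀ s a, |phat s a - p s a| ≤ ε)
    (f fhat : S → ℝ) (hfm : Measurable f) (hfhatm : Measurable fhat)
    (Cf Cfhat : ℝ) (hfb : ∀ s, |f s| ≤ Cf) (hfhatb : ∀ s, |fhat s| ≤ Cfhat)
    (hfe : ∀ s, |fhat s - f s| ≤ M)
    (Qhat Q : S → A → ℝ)
    (hQhat : ∀ s a, Qhat s a = α * phat s a - α * phat s aA + fhat s)
    (hQ : ∀ s a, Q s a = α * p s a - α * p s aA + f s)
    (rbar r : S → A → ℝ)
    (hrbar : ∀ s a,
      rbar s a = Qhat s a - γ * ∫ s', (-α * phat s' aA + Qhat s' aA) ∂(κ (s, a)))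
    (hr : ∀ s a,
      r s a = Q s a - γ * ∫ s', (-α * p s' aA + Q s' aA) ∂(κ (s, a))) :
    ∀ s a, |rbar s a - r s a| ≤ (1 + γ) * M + (2 + γ) * α * ε := by
  intro s a
  set μ := κ (s, a) with hμ
  haveI : IsProbabilityMeasure μ := hκp (s, a)
  -- measurability of slices
  have hphat_slice : Measurable fun s' : S => phat s' aA :=
    hphatm.comp (measurable_id.prodMk measurable_const)
  have hp_slice : Measurable fun s' : S => p s' aA :=
    hpm.comp (measurable_id.prodMk measurable_const)
  have hg_meas : Measurable fun s' : S => -α * phat s' aA + Qhat s' aA := by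
    have : (fun s' : S => -α * phat s' aA + Qhat s' aA)
        = fun s' => -α * phat s' aA + (α * phat s' aA - α * phat s' aA + fhat s') := by
      funext s'; rw [hQhat]
    rw [this]
    exact ((hphat_slice.const_mul (-α)).add
      (((hphat_slice.const_mul α).sub (hphat_slice.const_mul α)).add hfhatm))
  have hgt_meas : Measurable fun s' : S => -α * p s' aA + Q s' aA := by
    have : (fun s' : S => -α * p s' aA + Q s' aA)
        = fun s' => -α * p s' aA + (α * p s' aA - α * p s' aA + f s') := by
      funext s'; rw [hQ]
    rw [this]
    exact ((hp_slice.const_mul (-α)).add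
      (((hp_slice.const_mul α).sub (hp_slice.const_mul α)).add hfm))
  -- integrability from boundedness
  have hg_int : Integrable (fun s' : S => -α * phat s' aA + Qhat s' aA) μ := by
    refine (integrable_const (α * Cphat + (Cphat * (2 * α) + Cfhat))).mono'
      hg_meas.aestronglyMeasurable (Filter.Eventually.of_forall fun s' => ?_)
    rw [hQhat]
    have h1 : |(-α) * phat s' aA| ≤ α * Cphat := by
      rw [abs_mul, abs_neg, abs_of_pos hα]
      exact mul_le_mul_of_nonneg_left (hphatb s' aA) hα.le
    have h2 : |α * phat s' aA - α * phat s' aA + fhat s'| ≤ Cphat * (2 * α) + Cfhat := by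
      simp only [sub_self, zero_add]
      refine (hfhatb s').trans ?_
      nlinarith [abs_nonneg (phat s' aA), (abs_nonneg (phat s' aA)).trans (hphatb s' aA)]
    simpa using (abs_add_le ((-α) * phat s' aA) (α * phat s' aA - α * phat s' aA + fhat s')).trans
      (add_le_add h1 h2)
  have hgt_int : Integrable (fun s' : S => -α * p s' aA + Q s' aA) μ := by
    refine (integrable_const (α * Cp + (Cp * (2 * α) + Cf))).mono'
      hgt_meas.aestronglyMeasurable (Filter.Eventually.of_forall fun s' => ?_)
    rw [hQ]
    have h1 : |(-α) * p s' aA| ≤ α * Cp := by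
      rw [abs_mul, abs_neg, abs_of_pos hα]
      exact mul_le_mul_of_nonneg_left (hpb s' aA) hα.le
    have h2 : |α * p s' aA - α * p s' aA + f s'| ≤ Cp * (2 * α) + Cf := by
      simp only [sub_self, zero_add]
      refine (hfb s').trans ?_
      nlinarith [abs_nonneg (p s' aA), (abs_nonneg (p s' aA)).trans (hpb s' aA)]
    simpa using (abs_add_le ((-α) * p s' aA) (α * p s' aA - α * p s' aA + f s')).trans
      (add_le_add h1 h2)
  -- bound on the difference of integrals
  have hint_diff : |(∫ s', (-α * phat s' aA + Qhat s' aA) ∂μ)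
      - ∫ s', (-α * p s' aA + Q s' aA) ∂μ| ≤ α * ε + M := by
    rw [← integral_sub hg_int hgt_int]
    have hbd : ∀ s' : S,
        ‖(-α * phat s' aA + Qhat s' aA) - (-α * p s' aA + Q s' aA)‖ ≤ α * ε + M := by
      intro s'
      rw [hQhat, hQ]
      have : (-α * phat s' aA + (α * phat s' aA - α * phat s' aA + fhat s'))
          - (-α * p s' aA + (α * p s' aA - α * p s' aA + f s'))
          = (-α) * (phat s' aA - p s' aA) + (fhat s' - f s') := by ring
      rw [Real.norm_eq_abs, this]
      refine (abs_add_le _ _).trans (add_le_add ?_ (hfe s'))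
      rw [abs_mul, abs_neg, abs_of_pos hα]
      exact mul_le_mul_of_nonneg_left (hpe s' aA) hα.le
    have := norm_integral_le_of_norm_le_const (μ := μ)
      (f := fun s' => (-α * phat s' aA + Qhat s' aA) - (-α * p s' aA + Q s' aA))
      (C := α * ε + M) (Filter.Eventually.of_forall hbd)
    simpa [Real.norm_eq_abs] using this
  -- main estimate
  rw [hrbar, hr, ← hμ]
  have hQdiff : |Qhat s a - Q s a| ≤ 2 * α * ε + M := by
    rw [hQhat, hQ]
    have : (α * phat s a - α * phat s aA + fhat s) - (α * p s a - α * p s aA + f s)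
        = α * (phat s a - p s a) + ((-α) * (phat s aA - p s aA) + (fhat s - f s)) := by ring
    rw [this]
    refine (abs_add_le _ _).trans ?_
    have h1 : |α * (phat s a - p s a)| ≤ α * ε := by
      rw [abs_mul, abs_of_pos hα]; exact mul_le_mul_of_nonneg_left (hpe s a) hα.le
    have h2 : |(-α) * (phat s aA - p s aA) + (fhat s - f s)| ≤ α * ε + M := by
      refine (abs_add_le _ _).trans (add_le_add ?_ (hfe s))
      rw [abs_mul, abs_neg, abs_of_pos hα]
      exact mul_le_mul_of_nonneg_left (hpe s aA) hα.le
    linarith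
  have key : Qhat s a - γ * ∫ s', (-α * phat s' aA + Qhat s' aA) ∂μ
      - (Q s a - γ * ∫ s', (-α * p s' aA + Q s' aA) ∂μ)
      = (Qhat s a - Q s a) - γ * ((∫ s', (-α * phat s' aA + Qhat s' aA) ∂μ)
        - ∫ s', (-α * p s' aA + Q s' aA) ∂μ) := by ring
  rw [key]
  refine (abs_sub _ _).trans ?_
  have h3 : |γ * ((∫ s', (-α * phat s' aA + Qhat s' aA) ∂μ)
      - ∫ s', (-α * p s' aA + Q s' aA) ∂μ)| ≤ γ * (α * ε + M) := by
    rw [abs_mul, abs_of_nonneg hγ0]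
    exact mul_le_mul_of_nonneg_left hint_diff hγ0
  nlinarith [mul_nonneg hγ0 hε, mul_nonneg hγ0 hM, hα.le]
end

section
/- Let S be a measurable space, κ : S → Measure(S) a Markov kernel, γ ∈ [0, 1), p : S → ℝ bounded measurable, and α₁, α₂ > 0. Suppose f₁, f₂ : S → ℝ are bounded measurable and satisfy, for i = 1, 2 and all s ∈ S, f_i(s) = γ·∫_S (−α_i·p(s') + f_i(s')) dκ(s)(s'). Then α₂·f₁(s) = α₁·f₂(s) for all s ∈ S. -/
open MeasureTheory Real

/-- α-scaling of anchor Q-function estimators (zero anchor reward case): if `f₁` and `f₂`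
are bounded measurable solutions of the fixed-point equations
`fᵢ(s) = γ ∫ (-αᵢ p(s') + fᵢ(s')) dκ(s)(s')` for temperatures `α₁, α₂ > 0`, then
`α₂ f₁ = α₁ f₂`. -/
theorem anchor_fixed_point_alpha_scaling
    {S : Type*} [MeasurableSpace S] (κ : S → Measure S)
    (hκm : Measurable κ) (hκp : ∀ s, IsProbabilityMeasure (κ s))
    (γ : ℝ) (hγ0 : 0 ≤ γ) (hγ1 : γ < 1)
    (p : S → ℝ) (hpm : Measurable p) (Cp : ℝ) (hpb : ∀ s, |p s| ≤ Cp)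
    (α₁ α₂ : ℝ) (hα₁ : 0 < α₁) (hα₂ : 0 < α₂)
    (f₁ f₂ : S → ℝ) (hf₁m : Measurable f₁) (hf₂m : Measurable f₂)
    (C₁ C₂ : ℝ) (hf₁b : ∀ s, |f₁ s| ≤ C₁) (hf₂b : ∀ s, |f₂ s| ≤ C₂)
    (hfix₁ : ∀ s, f₁ s = γ * ∫ s', (-α₁ * p s' + f₁ s') ∂(κ s))
    (hfix₂ : ∀ s, f₂ s = γ * ∫ s', (-α₂ * p s' + f₂ s') ∂(κ s)) :
    ∀ s, α₂ * f₁ s = α₁ * f₂ s := by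
  set g : S → ℝ := fun s => α₂ * f₁ s - α₁ * f₂ s with hg
  set C : ℝ := α₂ * C₁ + α₁ * C₂ with hC
  have hgm : Measurable g := ((hf₁m.const_mul α₂).sub (hf₂m.const_mul α₁))
  have hgb : ∀ s, |g s| ≤ C := by
    intro s
    calc |g s| ≤ |α₂ * f₁ s| + |α₁ * f₂ s| := abs_sub _ _
    _ = α₂ * |f₁ s| + α₁ * |f₂ s| := by
        rw [abs_mul, abs_mul, abs_of_pos hα₂, abs_of_pos hα₁]
    _ ≤ C := add_le_add (mul_le_mul_of_nonneg_left (hf₁b s) hα₂.le)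
        (mul_le_mul_of_nonneg_left (hf₂b s) hα₁.le)
  -- integrability of bounded measurable functions against probability measures
  have hint : ∀ (h : S → ℝ) (Ch : ℝ), Measurable h → (∀ s, |h s| ≤ Ch) →
      ∀ s, Integrable h (κ s) := by
    intro h Ch hm hb s
    haveI := hκp s
    exact (integrable_const Ch).mono' hm.aestronglyMeasurable
      (Filter.Eventually.of_forall fun s' => by simpa using hb s')
  have hintp : ∀ s, Integrable p (κ s) := hint p Cp hpm hpb
  have hintf₁ : ∀ s, Integrable f₁ (κ s) := hint f₁ C₁ hf₁m hf₁b
  have hintf₂ : ∀ s, Integrable f₂ (κ s) := hint f₂ C₂ hf₂m hf₂b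
  have hintg : ∀ s, Integrable g (κ s) := hint g C hgm hgb
  -- the fixed point equation for g
  have hfixg : ∀ s, g s = γ * ∫ s', g s' ∂(κ s) := by
    intro s
    have h1 : ∫ s', (-α₁ * p s' + f₁ s') ∂(κ s)
        = -α₁ * ∫ s', p s' ∂(κ s) + ∫ s', f₁ s' ∂(κ s) := by
      rw [integral_add ((hintp s).const_mul _) (hintf₁ s), integral_const_mul]
    have h2 : ∫ s', (-α₂ * p s' + f₂ s') ∂(κ s)
        = -α₂ * ∫ s', p s' ∂(κ s) + ∫ s', f₂ s' ∂(κ s) := by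
      rw [integral_add ((hintp s).const_mul _) (hintf₂ s), integral_const_mul]
    have h3 : ∫ s', g s' ∂(κ s)
        = α₂ * ∫ s', f₁ s' ∂(κ s) - α₁ * ∫ s', f₂ s' ∂(κ s) := by
      simp only [hg]
      rw [integral_sub ((hintf₁ s).const_mul _) ((hintf₂ s).const_mul _),
        integral_const_mul, integral_const_mul]
    rw [h3]
    simp only [hg, hfix₁ s, hfix₂ s, h1, h2]
    ring
  -- geometric bound by induction
  intro s
  have hCnn : 0 ≤ C := le_trans (abs_nonneg _) (hgb s)
  have key : ∀ n : ℕ, ∀ t, |g t| ≤ γ ^ n * C := by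
    intro n
    induction n with
    | zero => intro t; simpa using hgb t
    | succ n ih =>
      intro t
      haveI := hκp t
      rw [hfixg t, abs_mul, abs_of_nonneg hγ0]
      have : |∫ s', g s' ∂(κ t)| ≤ γ ^ n * C := by
        calc |∫ s', g s' ∂(κ t)| ≤ ∫ s', |g s'| ∂(κ t) := by simpa using norm_integral_le_integral_norm g
        _ ≤ ∫ _s', γ ^ n * C ∂(κ t) := by
            refine integral_mono_of_nonneg (Filter.Eventually.of_forall fun s' => abs_nonneg _)
              (integrable_const _) (Filter.Eventually.of_forall fun s' => ih s')
        _ = γ ^ n * C := by simp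
      calc γ * |∫ s', g s' ∂(κ t)| ≤ γ * (γ ^ n * C) :=
            mul_le_mul_of_nonneg_left this hγ0
      _ = γ ^ (n + 1) * C := by ring
  have hlim : Filter.Tendsto (fun n : ℕ => γ ^ n * C) Filter.atTop (nhds 0) := by
    simpa using (tendsto_pow_atTop_nhds_zero_of_lt_one hγ0 hγ1).mul_const C
  have : |g s| ≤ 0 := le_of_tendsto_of_tendsto' tendsto_const_nhds hlim (fun n => key n s)
  have h0 : α₂ * f₁ s - α₁ * f₂ s = 0 := by simpa [hg] using abs_nonpos_iff.mp this
  linarith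
end

section
/- Let S be a measurable space, κ : S → Measure(S) a Markov kernel, γ ∈ [0, 1), g, p : S → ℝ bounded measurable, and α₁, α₂ > 0. Let G : S → ℝ be a bounded measurable function satisfying G(s) = g(s) + γ·∫_S G(s') dκ(s)(s') for all s, and suppose f₁, f₂ : S → ℝ are bounded measurable and satisfy, for i = 1, 2 and all s ∈ S, f_i(s) = g(s) + γ·∫_S (−α_i·p(s') + f_i(s')) dκ(s)(s'). Then α₂·(f₁(s) − G(s)) = α₁·(f₂(s) − G(s)) for all s ∈ S. -/
open MeasureTheory Real

/-- α-scaling of anchor Q-function estimators (general anchor reward `g`): if `G` is a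
bounded measurable solution of `G(s) = g(s) + γ ∫ G(s') dκ(s)(s')` and `f₁`, `f₂` are
bounded measurable solutions of `fᵢ(s) = g(s) + γ ∫ (-αᵢ p(s') + fᵢ(s')) dκ(s)(s')` for
temperatures `α₁, α₂ > 0`, then `α₂ (f₁ - G) = α₁ (f₂ - G)` pointwise. -/
theorem anchor_fixed_point_alpha_scaling_general
    {S : Type*} [MeasurableSpace S] (κ : S → Measure S)
    (hκm : Measurable κ) (hκp : ∀ s, IsProbabilityMeasure (κ s))
    (γ : ℝ) (hγ0 : 0 ≤ γ) (hγ1 : γ < 1)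
    (g p : S → ℝ) (hgm : Measurable g) (hpm : Measurable p)
    (Cg Cp : ℝ) (hgb : ∀ s, |g s| ≤ Cg) (hpb : ∀ s, |p s| ≤ Cp)
    (α₁ α₂ : ℝ) (hα₁ : 0 < α₁) (hα₂ : 0 < α₂)
    (G : S → ℝ) (hGm : Measurable G) (CG : ℝ) (hGb : ∀ s, |G s| ≤ CG)
    (hGfix : ∀ s, G s = g s + γ * ∫ s', G s' ∂(κ s))
    (f₁ f₂ : S → ℝ) (hf₁m : Measurable f₁) (hf₂m : Measurable f₂)
    (C₁ C₂ : ℝ) (hf₁b : ∀ s, |f₁ s| ≤ C₁) (hf₂b : ∀ s, |f₂ s| ≤ C₂)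
    (hfix₁ : ∀ s, f₁ s = g s + γ * ∫ s', (-α₁ * p s' + f₁ s') ∂(κ s))
    (hfix₂ : ∀ s, f₂ s = g s + γ * ∫ s', (-α₂ * p s' + f₂ s') ∂(κ s)) :
    ∀ s, α₂ * (f₁ s - G s) = α₁ * (f₂ s - G s) := by
  -- integrability of bounded measurable functions w.r.t. probability measures
  have hint : ∀ (h : S → ℝ) (C : ℝ), Measurable h → (∀ x, |h x| ≤ C) →
      ∀ s, Integrable h (κ s) := by
    intro h C hm hb s
    exact (integrable_const C).mono' hm.aestronglyMeasurable
      (Filter.Eventually.of_forall fun x => by simpa using hb x)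
  have hip := hint p Cp hpm hpb
  have hiG := hint G CG hGm hGb
  have hi1 := hint f₁ C₁ hf₁m hf₁b
  have hi2 := hint f₂ C₂ hf₂m hf₂b
  set D : S → ℝ := fun s => α₂ * (f₁ s - G s) - α₁ * (f₂ s - G s) with hDdef
  have hDm : Measurable D := by
    fun_prop
  set M : ℝ := α₂ * (C₁ + CG) + α₁ * (C₂ + CG) with hM
  have hDb : ∀ s, |D s| ≤ M := by
    intro s
    have h1 : |α₂ * (f₁ s - G s)| ≤ α₂ * (C₁ + CG) := by
      rw [abs_mul, abs_of_pos hα₂]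
      have := abs_sub (f₁ s) (G s)
      nlinarith [hf₁b s, hGb s, abs_sub_abs_le_abs_sub (f₁ s) (G s), abs_sub (f₁ s) (G s)]
    have h2 : |α₁ * (f₂ s - G s)| ≤ α₁ * (C₂ + CG) := by
      rw [abs_mul, abs_of_pos hα₁]
      nlinarith [hf₂b s, hGb s, abs_sub (f₂ s) (G s)]
    calc |D s| ≤ |α₂ * (f₁ s - G s)| + |α₁ * (f₂ s - G s)| := abs_sub _ _
      _ ≤ M := by rw [hM]; linarith
  have hiD : ∀ s, Integrable D (κ s) := hint D M hDm hDb
  -- fixed point equation for D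
  have hDfix : ∀ s, D s = γ * ∫ s', D s' ∂(κ s) := by
    intro s
    have e1 : ∫ s', (-α₁ * p s' + f₁ s') ∂(κ s)
        = -α₁ * (∫ s', p s' ∂(κ s)) + ∫ s', f₁ s' ∂(κ s) := by
      rw [integral_add ((hip s).const_mul _) (hi1 s), integral_const_mul _ _]
    have e2 : ∫ s', (-α₂ * p s' + f₂ s') ∂(κ s)
        = -α₂ * (∫ s', p s' ∂(κ s)) + ∫ s', f₂ s' ∂(κ s) := by
      rw [integral_add ((hip s).const_mul _) (hi2 s), integral_const_mul _ _]
    have eD : ∫ s', D s' ∂(κ s)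
        = α₂ * ((∫ s', f₁ s' ∂(κ s)) - ∫ s', G s' ∂(κ s))
          - α₁ * ((∫ s', f₂ s' ∂(κ s)) - ∫ s', G s' ∂(κ s)) := by
      have h1 : Integrable (fun s' => α₂ * (f₁ s' - G s')) (κ s) :=
        ((hi1 s).sub (hiG s)).const_mul _
      have h2 : Integrable (fun s' => α₁ * (f₂ s' - G s')) (κ s) :=
        ((hi2 s).sub (hiG s)).const_mul _
      simp only [hDdef]
      rw [integral_sub h1 h2, integral_const_mul, integral_const_mul,
        integral_sub (hi1 s) (hiG s), integral_sub (hi2 s) (hiG s)]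
    have q1 := hfix₁ s
    have q2 := hfix₂ s
    have qG := hGfix s
    rw [e1] at q1
    rw [e2] at q2
    simp only [hDdef]
    rw [eD, q1, q2, qG]
    ring
  -- iterate the contraction
  have hiter : ∀ n : ℕ, ∀ s, |D s| ≤ γ ^ n * M := by
    intro n
    induction n with
    | zero => simpa using hDb
    | succ n ih =>
      intro s
      have hle : ‖∫ s', D s' ∂(κ s)‖ ≤ γ ^ n * M := by
        have := hκp s
        calc ‖∫ s', D s' ∂(κ s)‖ ≤ (γ ^ n * M) * ((κ s) Set.univ).toReal :=
            norm_integral_le_of_norm_le_const (Filter.Eventually.of_forall fun x => by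
              simpa using ih x)
          _ = γ ^ n * M := by simp
      calc |D s| = γ * ‖∫ s', D s' ∂(κ s)‖ := by
            rw [hDfix s, abs_mul, abs_of_nonneg hγ0]; rfl
        _ ≤ γ * (γ ^ n * M) := by nlinarith
        _ = γ ^ (n + 1) * M := by ring
  have hD0 : ∀ s, D s = 0 := by
    intro s
    have htend : Filter.Tendsto (fun n : ℕ => γ ^ n * M) Filter.atTop (nhds 0) := by
      have := tendsto_pow_atTop_nhds_zero_of_lt_one hγ0 hγ1
      simpa using this.mul_const M
    have : |D s| ≤ 0 :=
      ge_of_tendsto htend (Filter.Eventually.of_forall fun n => hiter n s)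
    have := abs_nonneg (D s)
    have : |D s| = 0 := le_antisymm ‹|D s| ≤ 0› this
    exact abs_eq_zero.mp this
  intro s
  have := hD0 s
  simp only [hDdef] at this
  linarith
end

section
/- Let S, A be measurable spaces, a^A ∈ A, κ : S × A → Measure(S) a Markov kernel, γ ∈ [0, 1), α₁, α₂ > 0, and p : S × A → ℝ bounded measurable. Suppose f₁, f₂ : S → ℝ are bounded measurable and satisfy, for i = 1, 2 and all s ∈ S, f_i(s) = γ·∫_S (−α_i·p(s', a^A) + f_i(s')) dκ(s, a^A)(s'). Define Q̂_i(s,a) := α_i·(p(s,a) − p(s,a^A)) + f_i(s) and r̂_i(s,a) := Q̂_i(s,a) − γ·∫_S (−α_i·p(s', a^A) + Q̂_i(s', a^A)) dκ(s,a)(s'). Then α₂·r̂₁(s,a) = α₁·r̂₂(s,a) for all (s,a) ∈ S × A. -/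
open MeasureTheory Real

/-- α-scaling of the PQR reward estimator (zero anchor reward case): with `fᵢ` the anchor
Q-function estimator at temperature `αᵢ` (a bounded measurable fixed point of the anchor
Bellman equation), `Q̂ᵢ(s,a) = αᵢ (p(s,a) - p(s,a^A)) + fᵢ(s)` the corresponding
Q-Estimator, and `r̂ᵢ` the R-Estimator computed with the exact transition expectation,
one has `α₂ r̂₁(s,a) = α₁ r̂₂(s,a)` for all `(s,a)`. -/
theorem pqr_reward_alpha_scaling
    {S A : Type*} [MeasurableSpace S] [MeasurableSpace A] (aA : A)
    (κ : S × A → Measure S) (hκm : Measurable κ)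
    (hκp : ∀ sa, IsProbabilityMeasure (κ sa))
    (γ : ℝ) (hγ0 : 0 ≤ γ) (hγ1 : γ < 1)
    (α₁ α₂ : ℝ) (hα₁ : 0 < α₁) (hα₂ : 0 < α₂)
    (p : S → A → ℝ) (hpm : Measurable fun sa : S × A => p sa.1 sa.2)
    (Cp : ℝ) (hpb : ∀ s a, |p s a| ≤ Cp)
    (f₁ f₂ : S → ℝ) (hf₁m : Measurable f₁) (hf₂m : Measurable f₂)
    (C₁ C₂ : ℝ) (hf₁b : ∀ s, |f₁ s| ≤ C₁) (hf₂b : ∀ s, |f₂ s| ≤ C₂)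
    (hfix₁ : ∀ s, f₁ s = γ * ∫ s', (-α₁ * p s' aA + f₁ s') ∂(κ (s, aA)))
    (hfix₂ : ∀ s, f₂ s = γ * ∫ s', (-α₂ * p s' aA + f₂ s') ∂(κ (s, aA)))
    (Q₁ Q₂ : S → A → ℝ)
    (hQ₁ : ∀ s a, Q₁ s a = α₁ * (p s a - p s aA) + f₁ s)
    (hQ₂ : ∀ s a, Q₂ s a = α₂ * (p s a - p s aA) + f₂ s)
    (r₁ r₂ : S → A → ℝ)
    (hr₁ : ∀ s a,
      r₁ s a = Q₁ s a - γ * ∫ s', (-α₁ * p s' aA + Q₁ s' aA) ∂(κ (s, a)))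
    (hr₂ : ∀ s a,
      r₂ s a = Q₂ s a - γ * ∫ s', (-α₂ * p s' aA + Q₂ s' aA) ∂(κ (s, a))) :
    ∀ s a, α₂ * r₁ s a = α₁ * r₂ s a := by
  intro s a
  -- measurability / integrability basics
  have hpA : Measurable (fun s' => p s' aA) :=
    hpm.comp (measurable_id.prodMk measurable_const)
  have hint : ∀ (sa : S × A) (h : S → ℝ), Measurable h → ∀ C : ℝ, (∀ x, |h x| ≤ C) →
      Integrable h (κ sa) := by
    intro sa h hm C hb
    haveI := hκp sa
    exact ⟨hm.aestronglyMeasurable,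
      HasFiniteIntegral.of_bounded (C := C) (Filter.Eventually.of_forall fun x => hb x)⟩
  have hintp : ∀ sa : S × A, Integrable (fun s' => p s' aA) (κ sa) :=
    fun sa => hint sa _ hpA Cp (fun x => hpb x aA)
  have hintf₁ : ∀ sa : S × A, Integrable f₁ (κ sa) := fun sa => hint sa _ hf₁m C₁ hf₁b
  have hintf₂ : ∀ sa : S × A, Integrable f₂ (κ sa) := fun sa => hint sa _ hf₂m C₂ hf₂b
  -- the difference function
  set g : S → ℝ := fun s => α₂ * f₁ s - α₁ * f₂ s with hg_def
  have hgm : Measurable g := (hf₁m.const_mul α₂).sub (hf₂m.const_mul α₁)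
  have hgb : ∀ x, |g x| ≤ α₂ * C₁ + α₁ * C₂ := by
    intro x
    calc |α₂ * f₁ x - α₁ * f₂ x| ≤ |α₂ * f₁ x| + |α₁ * f₂ x| := abs_sub _ _
    _ = α₂ * |f₁ x| + α₁ * |f₂ x| := by
        rw [abs_mul, abs_mul, abs_of_pos hα₂, abs_of_pos hα₁]
    _ ≤ α₂ * C₁ + α₁ * C₂ := by
        have := hf₁b x; have := hf₂b x
        nlinarith [abs_nonneg (f₁ x), abs_nonneg (f₂ x)]
  have hintg : ∀ sa : S × A, Integrable g (κ sa) :=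
    fun sa => ((hintf₁ sa).const_mul α₂).sub ((hintf₂ sa).const_mul α₁)
  -- split the fixed-point integrals
  have hsplit : ∀ (sa : S × A) (c : ℝ) (h : S → ℝ), Integrable h (κ sa) →
      (∫ s', (c * p s' aA + h s') ∂(κ sa)) =
        c * (∫ s', p s' aA ∂(κ sa)) + ∫ s', h s' ∂(κ sa) := by
    intro sa c h hh
    rw [integral_add ((hintp sa).const_mul c) hh, integral_const_mul]
  -- g is a fixed point of the contraction
  have hgfix : ∀ s, g s = γ * ∫ s', g s' ∂(κ (s, aA)) := by
    intro s
    have e1 := hfix₁ s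
    have e2 := hfix₂ s
    rw [hsplit (s, aA) (-α₁) f₁ (hintf₁ _)] at e1
    rw [hsplit (s, aA) (-α₂) f₂ (hintf₂ _)] at e2
    have : (∫ s', g s' ∂(κ (s, aA))) =
        α₂ * (∫ s', f₁ s' ∂(κ (s, aA))) - α₁ * (∫ s', f₂ s' ∂(κ (s, aA))) := by
      rw [integral_sub ((hintf₁ _).const_mul α₂) ((hintf₂ _).const_mul α₁),
        integral_const_mul, integral_const_mul]
    rw [this, hg_def]
    simp only
    rw [e1, e2]
    ring
  -- contraction argument: g = 0
  have hgbn : ∀ n : ℕ, ∀ x, |g x| ≤ γ ^ n * (α₂ * C₁ + α₁ * C₂) := by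
    intro n
    induction n with
    | zero => simpa using hgb
    | succ n ih =>
      intro x
      haveI := hκp (x, aA)
      have : |∫ s', g s' ∂(κ (x, aA))| ≤ γ ^ n * (α₂ * C₁ + α₁ * C₂) := by
        calc |∫ s', g s' ∂(κ (x, aA))| ≤ ∫ s', |g s'| ∂(κ (x, aA)) :=
              by
              simpa [Real.norm_eq_abs] using
                norm_integral_le_integral_norm (μ := κ (x, aA)) g
        _ ≤ ∫ _, γ ^ n * (α₂ * C₁ + α₁ * C₂) ∂(κ (x, aA)) := by
            exact integral_mono (hintg _).abs (integrable_const _) fun s' => ih s'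
        _ = γ ^ n * (α₂ * C₁ + α₁ * C₂) := by simp
      calc |g x| = γ * |∫ s', g s' ∂(κ (x, aA))| := by
            rw [hgfix x, abs_mul, abs_of_nonneg hγ0]
      _ ≤ γ * (γ ^ n * (α₂ * C₁ + α₁ * C₂)) := by
            exact mul_le_mul_of_nonneg_left this hγ0
      _ = γ ^ (n + 1) * (α₂ * C₁ + α₁ * C₂) := by ring
  have hg0 : ∀ x, g x = 0 := by
    intro x
    have hlim : Filter.Tendsto (fun n : ℕ => γ ^ n * (α₂ * C₁ + α₁ * C₂)) Filter.atTop
        (nhds 0) := by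
      have := (tendsto_pow_atTop_nhds_zero_of_lt_one hγ0 hγ1).mul_const (α₂ * C₁ + α₁ * C₂)
      simpa using this
    have h0 : |g x| ≤ 0 := le_of_tendsto_of_tendsto' tendsto_const_nhds hlim
      (fun n => hgbn n x)
    exact abs_nonpos_iff.mp h0
  -- conclude
  have hQ₁A : ∀ s', Q₁ s' aA = f₁ s' := fun s' => by rw [hQ₁]; ring_nf
  have hQ₂A : ∀ s', Q₂ s' aA = f₂ s' := fun s' => by rw [hQ₂]; ring_nf
  have hI₁ : (∫ s', (-α₁ * p s' aA + Q₁ s' aA) ∂(κ (s, a))) =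
      -α₁ * (∫ s', p s' aA ∂(κ (s, a))) + ∫ s', f₁ s' ∂(κ (s, a)) := by
    simp_rw [hQ₁A]; exact hsplit (s, a) (-α₁) f₁ (hintf₁ _)
  have hI₂ : (∫ s', (-α₂ * p s' aA + Q₂ s' aA) ∂(κ (s, a))) =
      -α₂ * (∫ s', p s' aA ∂(κ (s, a))) + ∫ s', f₂ s' ∂(κ (s, a)) := by
    simp_rw [hQ₂A]; exact hsplit (s, a) (-α₂) f₂ (hintf₂ _)
  have hfeq : α₂ * f₁ s = α₁ * f₂ s := by
    have := hg0 s; simp only [hg_def] at this; linarith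
  have hfinteq : α₂ * (∫ s', f₁ s' ∂(κ (s, a))) = α₁ * (∫ s', f₂ s' ∂(κ (s, a))) := by
    have h0 : (∫ s', g s' ∂(κ (s, a))) = 0 := by
      simp [hg0]
    have : (∫ s', g s' ∂(κ (s, a))) =
        α₂ * (∫ s', f₁ s' ∂(κ (s, a))) - α₁ * (∫ s', f₂ s' ∂(κ (s, a))) := by
      rw [integral_sub ((hintf₁ _).const_mul α₂) ((hintf₂ _).const_mul α₁),
        integral_const_mul, integral_const_mul]
    linarith [this ▸ h0]
  rw [hr₁, hr₂, hQ₁, hQ₂, hI₁, hI₂]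
  nlinarith [hfeq, hfinteq]
end
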